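/- Let N be a planar nearring such that D(N) intersects exactly one Φ-orbit aΦ nontrivially, with a not a zero multiplier. Then aZ(Φ)* ⊆ GC(N) ⊆ aΦ*, where aZ(Φ)* = aZ(Φ) ∪ {0} and aΦ* = aΦ ∪ {0}. -/
import Mathlib


class RightNearring (N : Type*) extends AddGroup N, Mul N where
  mul_assoc : ∀ a b c : N, a * b * c = a * (b * c)
  right_distrib : ∀ a b c : N, (a + b) * c = a * c + b * c

/-- `a` and `b` are equivalent multipliers: `x*a = x*b` for all `x`. -/
def EquivMult {N : Type*} [Mul N] (a b : N) : Prop := ∀ x : N, x * a = x * b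

class PlanarNearring (N : Type*) extends RightNearring N where
  three_classes : ∃ a b c : N, ¬ EquivMult a b ∧ ¬ EquivMult b c ∧ ¬ EquivMult a c
  planar : ∀ a b c : N, ¬ EquivMult a b → ∃! x : N, x * a = x * b + c

/-- The set of distributive elements of a right nearring. -/
def DSet (N : Type*) [RightNearring N] : Set N :=
  {d | ∀ a b : N, d * (a + b) = d * a + d * b}

/-- The set of zero multipliers of a right nearring. -/
def ZM (N : Type*) [RightNearring N] : Set N := {n | ∀ a : N, a * n = 0}

/-- The generalized centre. -/
def GC (N : Type*) [RightNearring N] : Set N := {n | ∀ d ∈ DSet N, n * d = d * n}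

/-- The orbit of `d` under `Φ`, together with `0`. -/
def orbitZ (Φ : Type*) {N : Type*} [SMul Φ N] [Zero N] (d : N) : Set N :=
  {x | x = 0 ∨ ∃ φ : Φ, φ • d = x}

/-- A planar nearring presented by a fixed point free automorphism group `Φ`,
orbit representatives `R` and zero-multiplier representatives `M ⊆ R`. -/
structure FerreroStructure (Φ N : Type*) [Group Φ] [PlanarNearring N]
    [DistribMulAction Φ N] where
  fpf : ∀ φ : Φ, φ ≠ 1 → ∀ n : N, φ • n = n → n = 0
  reg : ∀ φ : Φ, φ ≠ 1 → Function.Bijective (fun n : N => -n + φ • n)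
  R : Set N
  M : Set N
  M_sub : M ⊆ R
  zero_not_mem : (0 : N) ∉ R
  rep : N → N
  aut : N → Φ
  rep_mem : ∀ n : N, n ≠ 0 → rep n ∈ R
  decomp : ∀ n : N, n ≠ 0 → aut n • rep n = n
  unique : ∀ n : N, n ≠ 0 → ∀ r ∈ R, ∀ φ : Φ, φ • r = n → r = rep n ∧ φ = aut n
  mul_eq : ∀ a b : N, b ≠ 0 → rep b ∉ M → a * b = aut b • a
  mul_zm : ∀ a b : N, b ≠ 0 → rep b ∈ M → a * b = 0

section Aux

variable {Φ N : Type*} [Group Φ] [PlanarNearring N] [DistribMulAction Φ N]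

lemma zmul (x : N) : (0 : N) * x = 0 := by
  have h : ((0 : N) + 0) * x = 0 * x + 0 * x := RightNearring.right_distrib 0 0 x
  rw [zero_add] at h
  exact left_eq_add.mp h

lemma smul_zero_cancel (φ : Φ) {n : N} (h : φ • n = 0) : n = 0 := by
  have h2 : φ⁻¹ • φ • n = φ⁻¹ • (0 : N) := by rw [h]
  simpa using h2

lemma mulz (S : FerreroStructure Φ N) (a : N) (haR : a ∈ S.R) (haM : a ∉ S.M) :
    ∀ n : N, n * (0 : N) = 0 := by
  intro n
  by_contra hc
  set c := n * (0 : N) with hcdef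
  have ha0 : a ≠ 0 := fun h => S.zero_not_mem (h ▸ haR)
  have hfc : c * 0 = c := by
    rw [hcdef, RightNearring.mul_assoc, zmul]
  -- every automorphism is trivial
  have hΦ : ∀ φ : Φ, φ = 1 := by
    intro φ
    by_contra hφ
    have hy0 : φ • a ≠ 0 := fun h => ha0 (smul_zero_cancel φ h)
    obtain ⟨hrep, haut⟩ := S.unique (φ • a) hy0 a haR φ rfl
    have h1 : c * (φ • a) = φ • c := by
      rw [S.mul_eq c (φ • a) hy0 (hrep ▸ haM), ← haut]
    have h2 : c * (φ • a) = c := by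
      rw [hcdef, RightNearring.mul_assoc, zmul]
    exact hc (S.fpf φ hφ c (h1.symm.trans h2))
  obtain ⟨hra, -⟩ := S.unique a ha0 a haR 1 (one_smul Φ a)
  by_cases hfid : ∀ x : N, x * (0 : N) = x
  · -- every element is an identity-multiplier or a zero-multiplier: only two classes
    have claim : ∀ m : N, (∀ x : N, x * m = x) ∨ (∀ x : N, x * m = 0) := by
      intro m
      by_cases hm0 : m = 0
      · exact Or.inl fun x => by rw [hm0]; exact hfid x
      by_cases hmM : S.rep m ∈ S.M
      · exact Or.inr fun x => S.mul_zm x m hm0 hmM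
      · exact Or.inl fun x => by rw [S.mul_eq x m hm0 hmM, hΦ (S.aut m), one_smul]
    obtain ⟨p, q, r, hpq, hqr, hpr⟩ := PlanarNearring.three_classes (N := N)
    rcases claim p with hp | hp <;> rcases claim q with hq | hq <;>
      rcases claim r with hr | hr
    all_goals first
      | exact hpq fun x => (hp x).trans (hq x).symm
      | exact hqr fun x => (hq x).trans (hr x).symm
      | exact hpr fun x => (hp x).trans (hr x).symm
  · -- use planarity with multipliers `a` and `0`
    push_neg at hfid
    obtain ⟨x0, hx0⟩ := hfid
    have hmula : ∀ x : N, x * a = x := by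
      intro x
      rw [S.mul_eq x a ha0 (hra ▸ haM), hΦ (S.aut a), one_smul]
    have hneq : ¬ EquivMult a (0 : N) := by
      intro h
      exact hx0 (((h x0).symm.trans (hmula x0)))
    obtain ⟨x, hx, hun⟩ := PlanarNearring.planar a 0 0 hneq
    have hz : (0 : N) = x := hun 0 (by
      show (0 : N) * a = 0 * 0 + 0
      rw [zmul, zmul, add_zero])
    have hcx : c = x := hun c (by
      show c * a = c * 0 + 0
      rw [hmula c, hfc, add_zero])
    exact hc (hcx.trans hz.symm)

end Aux

/-- if `D(N)` meets exactly one `Φ`-orbit `aΦ` nontrivially, `a` not a zero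
multiplier, then `aZ(Φ)* ⊆ GC(N) ⊆ aΦ*`. -/
theorem stmt18 {Φ N : Type*} [Group Φ] [PlanarNearring N] [DistribMulAction Φ N]
    (S : FerreroStructure Φ N) (a : N) (haR : a ∈ S.R) (haM : a ∉ S.M)
    -- `D(N)` meets the orbit of `a` nontrivially:
    (hmeet : ∃ d ∈ DSet N, d ≠ 0 ∧ ∃ φ : Φ, φ • a = d)
    -- and meets no other orbit:
    (honly : ∀ d ∈ DSet N, d ≠ 0 → ∃ φ : Φ, φ • a = d) :
    {x : N | x = 0 ∨ ∃ φ ∈ Subgroup.center Φ, φ • a = x} ⊆ GC N ∧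
    GC N ⊆ orbitZ Φ a := by
  have ha0 : a ≠ 0 := fun h => S.zero_not_mem (h ▸ haR)
  have hz : ∀ n : N, n * (0 : N) = 0 := mulz S a haR haM
  constructor
  · -- aZ(Φ)* ⊆ GC(N)
    rintro x (h0 | ⟨φ, hφc, hφa⟩)
    · intro d hd
      rw [h0, zmul, hz]
    · intro d hd
      by_cases hd0 : d = 0
      · rw [hd0, zmul, hz]
      have hx0 : x ≠ 0 := fun h => ha0 (smul_zero_cancel φ (hφa.trans h))
      obtain ⟨ψ, hψ⟩ := honly d hd hd0
      obtain ⟨hrd, had⟩ := S.unique d hd0 a haR ψ hψ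
      obtain ⟨hrx, hax⟩ := S.unique x hx0 a haR φ hφa
      show x * d = d * x
      rw [S.mul_eq x d hd0 (hrd ▸ haM), S.mul_eq d x hx0 (hrx ▸ haM), ← had, ← hax,
        ← hφa, ← hψ, smul_smul, smul_smul, Subgroup.mem_center_iff.mp hφc ψ]
  · -- GC(N) ⊆ aΦ*
    intro n hn
    by_cases hn0 : n = 0
    · exact Or.inl hn0
    obtain ⟨d, hd, hd0, φ, hφ⟩ := hmeet
    obtain ⟨hrd, had⟩ := S.unique d hd0 a haR φ hφ
    have hgc : n * d = d * n := hn d hd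
    have h1 : n * d = S.aut d • n := S.mul_eq n d hd0 (hrd ▸ haM)
    by_cases hm : S.rep n ∈ S.M
    · exfalso
      have h2 : d * n = 0 := S.mul_zm d n hn0 hm
      have h3 : S.aut d • n = 0 := by rw [← h1, hgc, h2]
      exact hn0 (smul_zero_cancel _ h3)
    · have h2 : d * n = S.aut n • d := S.mul_eq d n hn0 hm
      have key : S.aut d • n = S.aut n • d := by rw [← h1, ← h2]; exact hgc
      refine Or.inr ⟨(S.aut d)⁻¹ * (S.aut n * φ), ?_⟩
      rw [mul_smul, mul_smul, hφ, ← key]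
      exact inv_smul_smul _ _
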